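/- Let G be a (P₃∪P₂, K₄)-free graph. If G contains P₂∪K₃ (i.e., G has an edge whose endpoints are both nonadjacent to all three vertices of some triangle of G), then χ(G) ≤ 6. -/

import Mathlib

open SimpleGraph

/-- `G` contains `H`, i.e. `H` is isomorphic to an induced subgraph of `G`. -/
def Contains {V W : Type*} (G : SimpleGraph V) (H : SimpleGraph W) : Prop :=
  Nonempty (H ↪g G)

/-- The path `P₃` on 3 vertices. -/
def P3 : SimpleGraph (Fin 3) := fromEdgeSet {s(0,1), s(1,2)}

/-- The disjoint union `P₃ ∪ P₂` on 5 vertices. -/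
def P3P2 : SimpleGraph (Fin 5) := fromEdgeSet {s(0,1), s(1,2), s(3,4)}

/-- The disjoint union `K₃ ∪ P₂` on 5 vertices. -/
def K3P2 : SimpleGraph (Fin 5) := fromEdgeSet {s(0,1), s(0,2), s(1,2), s(3,4)}

/-- co-domino: the 6-cycle u₁v₁v₂v₃u₃u₂ (vertices 0 1 2 3 4 5) plus the edges
v₁v₃ and u₁u₃. -/
def coDomino : SimpleGraph (Fin 6) :=
  fromEdgeSet {s(0,1), s(1,2), s(2,3), s(3,4), s(4,5), s(5,0), s(1,3), s(0,4)}

/-- co-A: the 6-cycle u₁v₁v₂v₃u₃u₂ (vertices 0 1 2 3 4 5) plus the edges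
v₁v₃, u₁u₃ and u₁v₃. -/
def coA : SimpleGraph (Fin 6) :=
  fromEdgeSet {s(0,1), s(1,2), s(2,3), s(3,4), s(4,5), s(5,0), s(1,3), s(0,4), s(0,3)}

/-- χ37: the 6-cycle u₁v₁v₂v₃u₃u₂ (vertices 0 1 2 3 4 5) plus the single edge v₁v₃. -/
def chi37 : SimpleGraph (Fin 6) :=
  fromEdgeSet {s(0,1), s(1,2), s(2,3), s(3,4), s(4,5), s(5,0), s(1,3)}

/-- X₁: the 6-cycle v₁v₂v₃u₃u₂u₁ (vertices 0 1 2 3 4 5) plus the edge v₁v₃,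
together with a new vertex u = 6 and the edges uv₁ and uu₂. -/
def X1 : SimpleGraph (Fin 7) :=
  fromEdgeSet {s(0,1), s(1,2), s(2,3), s(3,4), s(4,5), s(5,0), s(0,2), s(6,0), s(6,4)}

/-- X₂: the 6-cycle v₁v₂v₃u₃u₂u₁ (vertices 0 1 2 3 4 5) plus the edges v₁v₃, v₃u₁, u₁u₃,
together with a new vertex u = 6 and the edges uv₂ and uu₂. -/
def X2 : SimpleGraph (Fin 7) :=
  fromEdgeSet {s(0,1), s(1,2), s(2,3), s(3,4), s(4,5), s(5,0), s(0,2), s(2,5), s(3,5),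
    s(6,1), s(6,4)}

/-- co-twin-C₅: the 5-cycle v₁v₂v₃v₄v₅ (vertices 0 1 2 3 4) plus a new vertex v₆ = 5
adjacent exactly to v₃, v₄ and v₅. -/
def coTwinC5 : SimpleGraph (Fin 6) :=
  fromEdgeSet {s(0,1), s(1,2), s(2,3), s(3,4), s(4,0), s(2,5), s(3,5), s(4,5)}

/-- `D₁ = {x : ω(G − N(x)) ≤ 2}`, where `G − N(x)` is the subgraph induced on the
vertices not adjacent to `x` (including `x` itself). -/
def D1 {V : Type*} (G : SimpleGraph V) : Set V :=
  {x : V | (G.induce {y : V | ¬ G.Adj x y}).cliqueNum ≤ 2}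

/-- `M(v)`: the set of vertices distinct from `v` and nonadjacent to `v`. -/
def Mset {V : Type*} (G : SimpleGraph V) (v : V) : Set V :=
  {u : V | u ≠ v ∧ ¬ G.Adj v u}

/-!
Fix an induced `K₃ ∪ P₂` with triangle `abc` and edge `de`. As `G` has no `K₄`, the common
neighbourhood of an edge is independent, which gives three colour classes for the vertices with
two neighbours in the triangle. As `G` has no induced `P₃ ∪ P₂`, adjacency is transitive among the
vertices anticomplete to any fixed edge. So a vertex with at most one neighbour in the triangle
that sees `d` or `e` sees both, and one that sees neither is anticomplete to `abcde`. The latter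
vertices induce a disjoint union of cliques of size at most three, anticomplete to `d`, `e` and
the common neighbours of `de` outside the first three classes; a `3`-colouring of them therefore
shares its colours with `{d}`, `{e}` and those common neighbours.
-/

namespace SimpleGraph

variable {V : Type*} {G : SimpleGraph V}

theorem colorable_of_forall_exists_mem_isIndepSet {n : ℕ} (t : Fin n → Set V)
    (ht : ∀ i, G.IsIndepSet (t i)) (hcover : ∀ x, ∃ i, x ∈ t i) : G.Colorable n := by
  choose c hc using hcover
  exact ⟨Coloring.mk c fun {x y} hxy hcxy => ht (c y) (hcxy ▸ hc x) (hc y) hxy.ne hxy⟩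

theorem IsIndepSet.union {s t : Set V} (hs : G.IsIndepSet s) (ht : G.IsIndepSet t)
    (hst : ∀ x ∈ s, ∀ y ∈ t, ¬ G.Adj x y) : G.IsIndepSet (s ∪ t) :=
  Set.pairwise_union.mpr ⟨hs, ht, fun x hx y hy _ => ⟨hst x hx y hy, fun h => hst x hx y hy h.symm⟩⟩

theorem isIndepSet_commonNeighbors (hK : G.CliqueFree 4) {u v : V} (huv : G.Adj u v) :
    G.IsIndepSet (G.commonNeighbors u v) := by
  classical
  intro x hx y hy _ hxy
  rw [mem_commonNeighbors] at hx hy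
  refine hK {x, y, u, v} ((is3Clique_triple_iff.mpr ⟨hy.1.symm, hy.2.symm, huv⟩).insert ?_)
  simp [hxy, hx.1.symm, hx.2.symm]

theorem cliqueFree_of_not_contains {n : ℕ} (hK : ¬ Contains G (completeGraph (Fin n))) :
    G.CliqueFree n := by
  by_contra h
  exact hK ⟨topEmbeddingOfNotCliqueFree h⟩

theorem exists_isIndepSet_cover_of_adj_trans [Finite V] {n : ℕ} (hK : G.CliqueFree (n + 1))
    {s : Set V}
    (htrans : ∀ ⦃x y z⦄, x ∈ s → y ∈ s → z ∈ s → G.Adj x y → G.Adj y z → x ≠ z → G.Adj x z) :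
    ∃ t : Fin n → Set V, (∀ i, G.IsIndepSet (t i)) ∧ ⋃ i, t i = s := by
  classical
  cases nonempty_fintype V
  let r := Fintype.equivFin V
  let earlier (x : V) : Finset V := {z | z ∈ s ∧ G.Adj z x ∧ r z < r x}
  have mem_earlier {x z : V} : z ∈ earlier x ↔ z ∈ s ∧ G.Adj z x ∧ r z < r x := by
    simp [earlier]
  have card_earlier_lt {x : V} (hx : x ∈ s) : (earlier x).card < n := by
    by_contra! h
    obtain ⟨u, hu, hcard⟩ := Finset.exists_subset_card_eq h
    have hclique : G.IsClique (u : Set V) := fun z hz w hw hzw =>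
      have hz := mem_earlier.mp (hu hz)
      have hw := mem_earlier.mp (hu hw)
      htrans hz.1 hx hw.1 hz.2.1 hw.2.1.symm hzw
    exact hK _ (IsNClique.insert ⟨hclique, hcard⟩ fun z hz => (mem_earlier.mp (hu hz)).2.1.symm)
  have card_earlier_lt_of_adj {x y : V} (hx : x ∈ s) (hy : y ∈ s) (hxy : G.Adj x y)
      (hr : r x < r y) : (earlier x).card < (earlier y).card := by
    refine Finset.card_lt_card (Finset.ssubset_iff_of_subset (fun z hz => ?_) |>.mpr
      ⟨x, mem_earlier.mpr ⟨hx, hxy, hr⟩, fun h => (mem_earlier.mp h).2.2.false⟩)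
    obtain ⟨hz, hzx, hzr⟩ := mem_earlier.mp hz
    exact mem_earlier.mpr ⟨hz, htrans hz hx hy hzx hxy (by rintro rfl; exact hr.asymm hzr),
      hzr.trans hr⟩
  refine ⟨fun i => {x | x ∈ s ∧ (earlier x).card = i}, ?_, Set.Subset.antisymm
    (Set.iUnion_subset fun i x hx => hx.1)
    fun x hx => Set.mem_iUnion.mpr ⟨⟨_, card_earlier_lt hx⟩, hx, rfl⟩⟩
  rintro i x ⟨hx, hxi⟩ y ⟨hy, hyi⟩ hne hxy
  rcases lt_or_gt_of_ne (r.injective.ne hne) with hr | hr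
  · exact (card_earlier_lt_of_adj hx hy hxy hr).ne (hxi.trans hyi.symm)
  · exact (card_earlier_lt_of_adj hy hx hxy.symm hr).ne (hyi.trans hxi.symm)

theorem adj_trans_of_not_contains_P3P2 (hP : ¬ Contains G P3P2) {u v x y z : V}
    (huv : G.Adj u v) (hxy : G.Adj x y) (hyz : G.Adj y z) (hxz : x ≠ z)
    (hx : ¬ G.Adj x u ∧ ¬ G.Adj x v) (hy : ¬ G.Adj y u ∧ ¬ G.Adj y v)
    (hz : ¬ G.Adj z u ∧ ¬ G.Adj z v) : G.Adj x z := by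
  by_contra hxz'
  have hne {w : V} (hw : ¬ G.Adj w u ∧ ¬ G.Adj w v) : w ≠ u ∧ w ≠ v :=
    ⟨by rintro rfl; exact hw.2 huv, by rintro rfl; exact hw.1 huv.symm⟩
  have := hne hx; have := hne hy; have := hne hz
  have := hxy.ne; have := hyz.ne; have := huv.ne
  refine hP ⟨⟨⟨![x, y, z, u, v], fun i j hij => ?_⟩, @fun i j => ?_⟩⟩
  · fin_cases i <;> fin_cases j <;> simp_all [eq_comm]
  · change G.Adj (![x, y, z, u, v] i) (![x, y, z, u, v] j) ↔ _
    simp only [P3P2, fromEdgeSet_adj, Set.mem_insert_iff, Set.mem_singleton_iff, Sym2.eq_iff]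
    fin_cases i <;> fin_cases j <;> simp_all [G.adj_comm]

structure IsK3P2 (G : SimpleGraph V) (a b c d e : V) : Prop where
  adj_ab : G.Adj a b
  adj_ac : G.Adj a c
  adj_bc : G.Adj b c
  adj_de : G.Adj d e
  not_adj : ∀ t ∈ ({a, b, c} : Set V), ¬ G.Adj t d ∧ ¬ G.Adj t e

theorem exists_isK3P2 (hc : Contains G K3P2) : ∃ a b c d e, G.IsK3P2 a b c d e := by
  obtain ⟨f⟩ := hc
  refine ⟨f 0, f 1, f 2, f 3, f 4, ⟨?_, ?_, ?_, ?_, ?_⟩⟩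
  all_goals simp only [Set.mem_insert_iff, Set.mem_singleton_iff, forall_eq_or_imp, forall_eq,
    f.map_rel_iff]
  all_goals simp [K3P2]

namespace IsK3P2

variable {a b c d e x y : V}

theorem not_adj' (h : G.IsK3P2 a b c d e) {t : V} (ht : t ∈ ({a, b, c} : Set V)) :
    ¬ G.Adj d t ∧ ¬ G.Adj e t := by
  simpa only [G.adj_comm d, G.adj_comm e] using h.not_adj t ht

theorem isClique (h : G.IsK3P2 a b c d e) : G.IsClique ({a, b, c} : Set V) := by
  simp [isClique_insert, h.adj_ab, h.adj_ac, h.adj_bc]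

theorem mem_commonNeighbors_of_not_subsingleton (h : G.IsK3P2 a b c d e)
    (hx : ¬ ({a, b, c} ∩ G.neighborSet x).Subsingleton) :
    x ∈ G.commonNeighbors b c ∨ x ∈ G.commonNeighbors a c ∨ x ∈ G.commonNeighbors a b := by
  obtain ⟨u, ⟨hu, hxu⟩, v, ⟨hv, hxv⟩, huv⟩ := Set.not_subsingleton_iff.mp hx
  simp only [mem_commonNeighbors, mem_neighborSet, Set.mem_insert_iff, Set.mem_singleton_iff] at *
  rcases hu with rfl | rfl | rfl <;> rcases hv with rfl | rfl | rfl <;> simp_all [G.adj_comm x]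

theorem exists_adj_not_adj_of_subsingleton (h : G.IsK3P2 a b c d e)
    (hx : ({a, b, c} ∩ G.neighborSet x).Subsingleton) :
    ∃ u ∈ ({a, b, c} : Set V), ∃ v ∈ ({a, b, c} : Set V),
      G.Adj u v ∧ ¬ G.Adj x u ∧ ¬ G.Adj x v := by
  have not_adj_other {u v : V} (hu : u ∈ ({a, b, c} : Set V)) (hv : v ∈ ({a, b, c} : Set V))
      (huv : G.Adj u v) (hxu : G.Adj x u) : ¬ G.Adj x v :=
    fun hxv => huv.ne (hx ⟨hu, hxu⟩ ⟨hv, hxv⟩)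
  by_cases hxa : G.Adj x a
  · exact ⟨b, by simp, c, by simp, h.adj_bc, not_adj_other (by simp) (by simp) h.adj_ab hxa,
      not_adj_other (by simp) (by simp) h.adj_ac hxa⟩
  by_cases hxb : G.Adj x b
  · exact ⟨a, by simp, c, by simp, h.adj_ac, hxa, not_adj_other (by simp) (by simp) h.adj_bc hxb⟩
  · exact ⟨a, by simp, b, by simp, h.adj_ab, hxa, hxb⟩

theorem adj_iff_adj_of_subsingleton (h : G.IsK3P2 a b c d e) (hP : ¬ Contains G P3P2)
    (hx : ({a, b, c} ∩ G.neighborSet x).Subsingleton) (hxd : x ≠ d) (hxe : x ≠ e) :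
    G.Adj x d ↔ G.Adj x e := by
  obtain ⟨u, hu, v, hv, huv, hxu, hxv⟩ := h.exists_adj_not_adj_of_subsingleton hx
  exact ⟨fun hxd' => adj_trans_of_not_contains_P3P2 hP huv hxd' h.adj_de hxe ⟨hxu, hxv⟩
      ⟨(h.not_adj' hu).1, (h.not_adj' hv).1⟩ ⟨(h.not_adj' hu).2, (h.not_adj' hv).2⟩,
    fun hxe' => adj_trans_of_not_contains_P3P2 hP huv hxe' h.adj_de.symm hxd ⟨hxu, hxv⟩
      ⟨(h.not_adj' hu).2, (h.not_adj' hv).2⟩ ⟨(h.not_adj' hu).1, (h.not_adj' hv).1⟩⟩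

theorem not_adj_of_subsingleton (h : G.IsK3P2 a b c d e) (hP : ¬ Contains G P3P2)
    (hx : ({a, b, c} ∩ G.neighborSet x).Subsingleton) (hxd : ¬ G.Adj x d) (hxe : ¬ G.Adj x e) :
    ∀ t ∈ ({a, b, c} : Set V), ¬ G.Adj x t := by
  intro t ht hxt
  obtain ⟨u, hu, v, hv, huv, hxu, hxv⟩ := h.exists_adj_not_adj_of_subsingleton hx
  have htu : t ≠ u := by rintro rfl; exact hxu hxt
  exact hxu (adj_trans_of_not_contains_P3P2 hP h.adj_de hxt (h.isClique ht hu htu)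
    (by rintro rfl; exact hxv huv) ⟨hxd, hxe⟩ (h.not_adj t ht) (h.not_adj u hu))

theorem not_adj_of_mem_commonNeighbors (h : G.IsK3P2 a b c d e) (hP : ¬ Contains G P3P2)
    (hx : x ∈ G.commonNeighbors d e) (hx' : ({a, b, c} ∩ G.neighborSet x).Subsingleton)
    (hy : ∀ t ∈ ({a, b, c} : Set V), ¬ G.Adj y t) (hyd : ¬ G.Adj y d) (hye : ¬ G.Adj y e) :
    ¬ G.Adj x y := by
  intro hxy
  obtain ⟨u, hu, v, hv, huv, hxu, hxv⟩ := h.exists_adj_not_adj_of_subsingleton hx'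
  exact hyd (adj_trans_of_not_contains_P3P2 hP huv hxy.symm (G.mem_commonNeighbors.mp hx).1.symm
    (by rintro rfl; exact hye h.adj_de) ⟨hy u hu, hy v hv⟩ ⟨hxu, hxv⟩
    ⟨(h.not_adj' hu).1, (h.not_adj' hv).1⟩)

theorem eq_or_eq_or_mem_commonNeighbors_or_not_adj (h : G.IsK3P2 a b c d e)
    (hP : ¬ Contains G P3P2) (hx : ({a, b, c} ∩ G.neighborSet x).Subsingleton) :
    x = d ∨ x = e ∨ x ∈ G.commonNeighbors d e ∨
      (∀ t ∈ ({a, b, c} : Set V), ¬ G.Adj x t) ∧ ¬ G.Adj x d ∧ ¬ G.Adj x e := by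
  by_cases hxd : x = d
  · exact Or.inl hxd
  by_cases hxe : x = e
  · exact Or.inr (Or.inl hxe)
  have hde := h.adj_iff_adj_of_subsingleton hP hx hxd hxe
  by_cases hxd' : G.Adj x d
  · exact Or.inr (Or.inr (Or.inl ⟨hxd'.symm, (hde.mp hxd').symm⟩))
  have hxe' := hde.not.mp hxd'
  exact Or.inr (Or.inr (Or.inr ⟨h.not_adj_of_subsingleton hP hx hxd' hxe', hxd', hxe'⟩))

theorem colorable_six [Finite V] (h : G.IsK3P2 a b c d e) (hP : ¬ Contains G P3P2)
    (hK : G.CliqueFree 4) : G.Colorable 6 := by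
  set Q := {y | (∀ t ∈ ({a, b, c} : Set V), ¬ G.Adj y t) ∧ ¬ G.Adj y d ∧ ¬ G.Adj y e}
  obtain ⟨q, hq, hq_union⟩ := exists_isIndepSet_cover_of_adj_trans (n := 3) hK (s := Q)
    fun x y z hx hy hz hxy hyz hxz => adj_trans_of_not_contains_P3P2 hP h.adj_de hxy hyz hxz
      hx.2 hy.2 hz.2
  have hq_subset (i : Fin 3) : q i ⊆ Q := hq_union ▸ Set.subset_iUnion q i
  set R := {x ∈ G.commonNeighbors d e | ({a, b, c} ∩ G.neighborSet x).Subsingleton}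
  refine colorable_of_forall_exists_mem_isIndepSet ![G.commonNeighbors b c, G.commonNeighbors a c,
    G.commonNeighbors a b, {d} ∪ q 0, {e} ∪ q 1, R ∪ q 2] ?_ ?_
  · intro i
    fin_cases i
    · exact isIndepSet_commonNeighbors hK h.adj_bc
    · exact isIndepSet_commonNeighbors hK h.adj_ac
    · exact isIndepSet_commonNeighbors hK h.adj_ab
    · exact IsIndepSet.union (Set.pairwise_singleton _ _) (hq 0) fun x hx y hy hxy =>
        (hq_subset 0 hy).2.1 (hx ▸ hxy.symm)
    · exact IsIndepSet.union (Set.pairwise_singleton _ _) (hq 1) fun x hx y hy hxy =>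
        (hq_subset 1 hy).2.2 (hx ▸ hxy.symm)
    · refine IsIndepSet.union ((isIndepSet_commonNeighbors hK h.adj_de).mono fun x hx => hx.1)
        (hq 2) fun x hx y hy => ?_
      obtain ⟨hyT, hyd, hye⟩ := hq_subset 2 hy
      exact h.not_adj_of_mem_commonNeighbors hP hx.1 hx.2 hyT hyd hye
  · intro x
    by_cases hx : ({a, b, c} ∩ G.neighborSet x).Subsingleton
    · rcases h.eq_or_eq_or_mem_commonNeighbors_or_not_adj hP hx with hxd | hxe | hxR | hxQ
      · exact ⟨3, Or.inl hxd⟩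
      · exact ⟨4, Or.inl hxe⟩
      · exact ⟨5, Or.inl ⟨hxR, hx⟩⟩
      · obtain ⟨i, hi⟩ := Set.mem_iUnion.mp (hq_union.symm.subset hxQ)
        fin_cases i
        exacts [⟨3, Or.inr hi⟩, ⟨4, Or.inr hi⟩, ⟨5, Or.inr hi⟩]
    · rcases h.mem_commonNeighbors_of_not_subsingleton hx with hx | hx | hx
      exacts [⟨0, hx⟩, ⟨1, hx⟩, ⟨2, hx⟩]

end IsK3P2

end SimpleGraph

theorem chromatic_le_six_of_K3P2 {V : Type*} [Fintype V] (G : SimpleGraph V)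
    (hP : ¬ Contains G P3P2) (hK : ¬ Contains G (completeGraph (Fin 4)))
    (hc : Contains G K3P2) :
    G.chromaticNumber ≤ 6 := by
  obtain ⟨a, b, c, d, e, h⟩ := exists_isK3P2 hc
  exact (h.colorable_six hP (cliqueFree_of_not_contains hK)).chromaticNumber_le
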